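/- Let B = t(α₁²+α₂²+α₃²+α₄²) + u(α₁α₄ − α₂α₃) + v(β₁²+β₂²) + w(γ₁²+γ₂²) be an ad(g_e)-invariant inner product on m = g_a ⊕ g_b ⊕ g_c ⊂ so(5). Then B is naturally reductive, i.e. B([Z,X]_m, Y) + B(X, [Z,Y]_m) = 0 for all X, Y, Z ∈ m (where [·,·]_m denotes the projection of the bracket onto m), if and only if t = v = w and u = 0. -/

import Mathlib

open Matrix

/-- Elementary skew-symmetric matrix: `1` at `(i,j)`, `-1` at `(j,i)` (0-based indices). -/
def E (i j : Fin 5) : Matrix (Fin 5) (Fin 5) ℝ :=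
  Matrix.single i j 1 - Matrix.single j i 1

/-- `m = g_a ⊕ g_b ⊕ g_c = span{A₁,A₂,A₃,A₄,B₁,B₂,C₁,C₂}`. -/
noncomputable def mm : Submodule ℝ (Matrix (Fin 5) (Fin 5) ℝ) :=
  Submodule.span ℝ {E 0 2, E 0 3, E 1 2, E 1 3, E 0 4, E 1 4, E 2 4, E 3 4}

/-- Projection of `so(5)` onto `m` along `g_e = span{E 0 1, E 2 3}`: it kills the
entries at positions `(0,1), (1,0), (2,3), (3,2)`. -/
def projm : Matrix (Fin 5) (Fin 5) ℝ →ₗ[ℝ] Matrix (Fin 5) (Fin 5) ℝ where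
  toFun X := Matrix.of fun i j =>
    if (i = 0 ∧ j = 1) ∨ (i = 1 ∧ j = 0) ∨ (i = 2 ∧ j = 3) ∨ (i = 3 ∧ j = 2) then 0
    else X i j
  map_add' X Y := by
    ext i j
    by_cases h : (i = 0 ∧ j = 1) ∨ (i = 1 ∧ j = 0) ∨ (i = 2 ∧ j = 3) ∨ (i = 3 ∧ j = 2) <;>
      simp [h]
  map_smul' c X := by
    ext i j
    by_cases h : (i = 0 ∧ j = 1) ∨ (i = 1 ∧ j = 0) ∨ (i = 2 ∧ j = 3) ∨ (i = 3 ∧ j = 2) <;>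
      simp [h]

/-- The `ad(g_e)`-invariant inner product
`B = t(α₁²+α₂²+α₃²+α₄²) + u(α₁α₄ - α₂α₃) + v(β₁²+β₂²) + w(γ₁²+γ₂²)` on `m`,
written in the coordinates `αᵢ, βᵢ, γᵢ` (upper-triangular matrix entries). -/
noncomputable def Bf (t u v w : ℝ) (X Y : Matrix (Fin 5) (Fin 5) ℝ) : ℝ :=
  t * (X 0 2 * Y 0 2 + X 0 3 * Y 0 3 + X 1 2 * Y 1 2 + X 1 3 * Y 1 3)
  + u / 2 * (X 0 2 * Y 1 3 + X 1 3 * Y 0 2 - X 0 3 * Y 1 2 - X 1 2 * Y 0 3)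
  + v * (X 0 4 * Y 0 4 + X 1 4 * Y 1 4)
  + w * (X 2 4 * Y 2 4 + X 3 4 * Y 3 4)

/-! With `t = v = w` and `u = 0`, the form `B` is `-(t/2) tr(XY)` as soon as one argument lies in
`m` and the other is skew-symmetric. Since `B` only reads the `m`-coordinates, the projection
onto `m` can be dropped, and natural reductivity reduces to the `ad`-invariance
`tr(⁅Z,X⁆ Y) + tr(X ⁅Z,Y⁆) = 0` of the trace form. Conversely, three choices of basis vectors
`X, Y, Z` already force `w = t`, `t = v` and `u = 0`. -/

def NaturallyReductive (B : Matrix (Fin 5) (Fin 5) ℝ → Matrix (Fin 5) (Fin 5) ℝ → ℝ) : Prop :=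
  ∀ X ∈ mm, ∀ Y ∈ mm, ∀ Z ∈ mm, B (projm ⁅Z, X⁆) Y + B X (projm ⁅Z, Y⁆) = 0

lemma E_mem_mm {i j : Fin 5}
    (hij : E i j ∈ ({E 0 2, E 0 3, E 1 2, E 1 3, E 0 4, E 1 4, E 2 4, E 3 4} :
      Set (Matrix (Fin 5) (Fin 5) ℝ))) : E i j ∈ mm :=
  Submodule.subset_span hij

lemma transpose_E (i j : Fin 5) : (E i j)ᵀ = -E i j := by
  simp [E, transpose_single]

lemma transpose_eq_neg_of_mem_mm {X : Matrix (Fin 5) (Fin 5) ℝ} (hX : X ∈ mm) : Xᵀ = -X := by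
  induction hX using Submodule.span_induction with
  | mem X hX =>
    rcases hX with rfl | rfl | rfl | rfl | rfl | rfl | rfl | rfl <;> exact transpose_E _ _
  | zero => simp
  | add X Y _ _ hX hY => rw [transpose_add, hX, hY, neg_add]
  | smul c X _ hX => rw [transpose_smul, hX, smul_neg]

lemma transpose_lie_of_transpose_eq_neg {n R : Type*} [Fintype n] [DecidableEq n] [CommRing R]
    {X Z : Matrix n n R} (hX : Xᵀ = -X) (hZ : Zᵀ = -Z) : ⁅Z, X⁆ᵀ = -⁅Z, X⁆ := by
  simp [Ring.lie_def, transpose_mul, hX, hZ]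

lemma trace_lie_mul_add_trace_mul_lie {n R : Type*} [Fintype n] [DecidableEq n] [CommRing R]
    (X Y Z : Matrix n n R) : trace (⁅Z, X⁆ * Y) + trace (X * ⁅Z, Y⁆) = 0 := by
  simp only [Ring.lie_def, sub_mul, mul_sub, trace_sub, Matrix.mul_assoc]
  rw [trace_mul_cycle' Z X Y, trace_mul_cycle' Y Z X]
  abel

lemma Bf_comm (t u v w : ℝ) (X Y : Matrix (Fin 5) (Fin 5) ℝ) :
    Bf t u v w X Y = Bf t u v w Y X := by
  unfold Bf; ring

lemma Bf_projm_left (t u v w : ℝ) (A Y : Matrix (Fin 5) (Fin 5) ℝ) :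
    Bf t u v w (projm A) Y = Bf t u v w A Y := by
  simp [Bf, projm]

lemma trace_mul_E_of_transpose_eq_neg {A : Matrix (Fin 5) (Fin 5) ℝ} (hA : Aᵀ = -A)
    (i j : Fin 5) : trace (A * E i j) = -2 * A i j := by
  have hji : A j i = -A i j := by simpa using congrFun (congrFun hA i) j
  simp [E, Matrix.mul_sub, trace_sub, trace_mul_single, hji]
  ring

lemma Bf_eq_neg_trace_mul {A Y : Matrix (Fin 5) (Fin 5) ℝ} (s : ℝ) (hA : Aᵀ = -A)
    (hY : Y ∈ mm) : Bf s 0 s s A Y = -(s / 2) * trace (A * Y) := by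
  induction hY using Submodule.span_induction with
  | mem Y hY =>
    rcases hY with rfl | rfl | rfl | rfl | rfl | rfl | rfl | rfl <;>
      rw [trace_mul_E_of_transpose_eq_neg hA] <;> simp [Bf, E, single] <;> ring
  | zero => simp [Bf]
  | add X Y _ _ hX hY =>
    simp only [Bf, Matrix.add_apply, Matrix.mul_add, trace_add] at *
    linear_combination hX + hY
  | smul c X _ hX =>
    simp only [Bf, Matrix.smul_apply, Matrix.mul_smul, trace_smul, smul_eq_mul] at *
    linear_combination c * hX

lemma naturallyReductive_Bf (s : ℝ) : NaturallyReductive (Bf s 0 s s) := by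
  intro X hX Y hY Z hZ
  have hXZ := transpose_lie_of_transpose_eq_neg (transpose_eq_neg_of_mem_mm hX)
    (transpose_eq_neg_of_mem_mm hZ)
  have hYZ := transpose_lie_of_transpose_eq_neg (transpose_eq_neg_of_mem_mm hY)
    (transpose_eq_neg_of_mem_mm hZ)
  rw [Bf_projm_left, Bf_comm _ _ _ _ X, Bf_projm_left, Bf_eq_neg_trace_mul s hXZ hY,
    Bf_eq_neg_trace_mul s hYZ hX, trace_mul_comm ⁅Z, Y⁆, ← mul_add,
    trace_lie_mul_add_trace_mul_lie, mul_zero]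

lemma eq_of_naturallyReductive_Bf {t u v w : ℝ} (h : NaturallyReductive (Bf t u v w)) :
    t = v ∧ v = w ∧ u = 0 := by
  have m02 : E 0 2 ∈ mm := E_mem_mm (by simp)
  have m13 : E 1 3 ∈ mm := E_mem_mm (by simp)
  have m04 : E 0 4 ∈ mm := E_mem_mm (by simp)
  have m24 : E 2 4 ∈ mm := E_mem_mm (by simp)
  -- `⁅E 0 4, E 0 2⁆ = E 2 4`, `⁅E 0 4, E 2 4⁆ = -E 0 2`, `⁅E 2 4, E 0 2⁆ = -E 0 4`,
  -- `⁅E 2 4, E 0 4⁆ = E 0 2` and `⁅E 0 4, E 1 3⁆ = 0`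
  have hwt := h _ m02 _ m24 _ m04
  have htv := h _ m02 _ m04 _ m24
  have hu := h _ m24 _ m13 _ m04
  simp [Bf, projm, Ring.lie_def, mul_apply, Fin.sum_univ_five, E, single] at hwt htv hu
  exact ⟨by linarith, by linarith, hu⟩

theorem naturally_reductive_iff_general
    (t u v w : ℝ) :
    (∀ X ∈ mm, ∀ Y ∈ mm, ∀ Z ∈ mm,
        Bf t u v w (projm ⁅Z, X⁆) Y + Bf t u v w X (projm ⁅Z, Y⁆) = 0) ↔
      (t = v ∧ v = w ∧ u = 0) := by
  refine ⟨eq_of_naturallyReductive_Bf, ?_⟩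
  rintro ⟨rfl, rfl, rfl⟩
  exact naturallyReductive_Bf t

/-- The metric associated with `B` is naturally reductive, i.e.
`B(⁅Z,X⁆_m, Y) + B(X, ⁅Z,Y⁆_m) = 0` for all `X, Y, Z ∈ m`, if and only if
`t = v = w` and `u = 0`. -/
theorem naturally_reductive_iff
    (t u v w : ℝ) (ht : 0 < t) (hv : 0 < v) (hw : 0 < w) (htu : u ^ 2 < 4 * t ^ 2) :
    (∀ X ∈ mm, ∀ Y ∈ mm, ∀ Z ∈ mm,
        Bf t u v w (projm ⁅Z, X⁆) Y + Bf t u v w X (projm ⁅Z, Y⁆) = 0) ↔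
      (t = v ∧ v = w ∧ u = 0) :=
  naturally_reductive_iff_general t u v w
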